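/- arXiv:2402.02489 — 2 statements merged into one kernel-verified Lean document; each statement's English description precedes it below -/
import Mathlib

section
/- For η > 0 and s, t ∈ ℝ, define g_u : ℝ → ℝ by g_u(x) = (2|x - u| - η)·1_{[u-η, u+η]}(x). Then (3/(2η³)) ∫_{-∞}^{∞} g_s(x) g_t(x) dx = κ(|s - t|/η), where κ(x) = 3x³-3x²-(3/2)x+1 for 0 ≤ x ≤ 1, κ(x) = -x³+3x²-(3/2)x-1 for 1 ≤ x ≤ 2, and κ(x) = 0 for x ≥ 2. In particular, for s = t the integral identity gives (3/(2η³)) ∫ g_t(x)² dx = 1. -/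
open MeasureTheory

noncomputable def kappa (x : ℝ) : ℝ :=
  if x ≤ 1 then 3 * x ^ 3 - 3 * x ^ 2 - (3 / 2) * x + 1
  else if x ≤ 2 then -x ^ 3 + 3 * x ^ 2 - (3 / 2) * x - 1
  else 0

noncomputable def g (η u x : ℝ) : ℝ :=
  (Set.Icc (u - η) (u + η)).indicator (fun y => 2 * |y - u| - η) x

/-!
Writing `x = η y + s` shows that `g η s` and `g η t` are `η` times the unit-width kernels `g 1 0`
and `g 1 r` with `r = (t - s) / η`, so the integral is `η ^ 3` times the unit-scale one. For
`0 ≤ r` the product of the unit kernels is supported on `[r - 1, 1]`, where it is a quadratic on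
each of the pieces cut out by the kinks at `0` and `r`; integrating these gives the two cubic
pieces of `kappa`, and an empty support for `r > 2`. The diagonal case is `kappa 0 = 1`.
-/

open Set intervalIntegral

theorem intervalIntegral_quadratic (A B C a b : ℝ) :
    ∫ x in a..b, (A * x ^ 2 + B * x + C) =
      A / 3 * (b ^ 3 - a ^ 3) + B / 2 * (b ^ 2 - a ^ 2) + C * (b - a) := by
  have hderiv (x : ℝ) : HasDerivAt (fun x => A / 3 * x ^ 3 + B / 2 * x ^ 2 + C * x)
      (A * x ^ 2 + B * x + C) x :=
    ((((hasDerivAt_pow 3 x).const_mul (A / 3)).add ((hasDerivAt_pow 2 x).const_mul (B / 2))).add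
      ((hasDerivAt_id x).const_mul C)).congr_deriv (by push_cast; ring)
  rw [integral_eq_sub_of_hasDerivAt (fun x _ => hderiv x)
    (Continuous.intervalIntegrable (by fun_prop) _ _)]
  ring

theorem intervalIntegral_eq_of_eqOn_quadratic {f : ℝ → ℝ} {a b : ℝ} (A B C : ℝ) (hab : a ≤ b)
    (hf : EqOn f (fun x => A * x ^ 2 + B * x + C) (Icc a b)) :
    ∫ x in a..b, f x = A / 3 * (b ^ 3 - a ^ 3) + B / 2 * (b ^ 2 - a ^ 2) + C * (b - a) := by
  rw [integral_congr (uIcc_of_le hab ▸ hf), intervalIntegral_quadratic]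

theorem g_apply (η u x : ℝ) : g η u x = if |x - u| ≤ η then 2 * |x - u| - η else 0 := by
  rw [g, indicator_apply]
  refine if_congr ?_ rfl rfl
  rw [mem_Icc, abs_sub_le_iff]
  constructor <;> rintro ⟨h₁, h₂⟩ <;> constructor <;> linarith

theorem g_mul_add (η u a x : ℝ) (hη : 0 < η) :
    g η u (η * x + a) = η * g 1 ((u - a) / η) x := by
  have h : η * x + a - u = η * (x - (u - a) / η) := by field_simp; ring
  simp only [g_apply, h, abs_mul, abs_of_pos hη, mul_le_iff_le_one_right hη]
  split_ifs <;> ring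

theorem integral_g_mul_g_eq_mul_integral_g_one (η s t : ℝ) (hη : 0 < η) :
    ∫ x, g η s x * g η t x = η ^ 3 * ∫ x, g 1 0 x * g 1 ((t - s) / η) x := by
  set F := fun x => g η s x * g η t x
  have hF (y : ℝ) : F (η * y + s) = η ^ 2 * (g 1 0 y * g 1 ((t - s) / η) y) := by
    simp only [F, g_mul_add _ _ _ _ hη, sub_self, zero_div]
    ring
  calc ∫ x, F x = ∫ y, F (y + s) := (integral_add_right_eq_self F s).symm
    _ = η * ∫ y, F (η * y + s) := by
      rw [Measure.integral_comp_mul_left (fun z => F (z + s)), abs_inv, abs_of_pos hη,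
        smul_eq_mul, mul_inv_cancel_left₀ hη.ne']
    _ = η ^ 3 * ∫ x, g 1 0 x * g 1 ((t - s) / η) x := by
      simp_rw [hF, MeasureTheory.integral_const_mul]
      ring

theorem g_mul_g_of_le (η : ℝ) {s t : ℝ} (hst : s ≤ t) (x : ℝ) :
    g η s x * g η t x =
      (Icc (t - η) (s + η)).indicator (fun y => (2 * |y - s| - η) * (2 * |y - t| - η)) x := by
  rw [g, g, ← inter_indicator_mul, Icc_inter_Icc, max_eq_right (by linarith),
    min_eq_left (by linarith)]

theorem integral_g_one_mul_g_one_eq_setIntegral {r : ℝ} (hr : 0 ≤ r) :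
    ∫ x, g 1 0 x * g 1 r x = ∫ x in Icc (r - 1) 1, (2 * |x| - 1) * (2 * |x - r| - 1) := by
  simp_rw [g_mul_g_of_le 1 hr, zero_add, sub_zero]
  exact integral_indicator measurableSet_Icc

theorem intervalIntegral_kernel_product_of_le_one {r : ℝ} (hr₀ : 0 ≤ r) (hr₁ : r ≤ 1) :
    ∫ x in r - 1..1, (2 * |x| - 1) * (2 * |x - r| - 1) =
      2 / 3 * (3 * r ^ 3 - 3 * r ^ 2 - (3 / 2) * r + 1) := by
  have hcont : Continuous fun x : ℝ => (2 * |x| - 1) * (2 * |x - r| - 1) := by fun_prop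
  rw [← integral_add_adjacent_intervals (b := 0) (hcont.intervalIntegrable _ _)
      (hcont.intervalIntegrable _ _),
    ← integral_add_adjacent_intervals (a := 0) (b := r) (hcont.intervalIntegrable _ _)
      (hcont.intervalIntegrable _ _),
    intervalIntegral_eq_of_eqOn_quadratic 4 (4 - 4 * r) (1 - 2 * r) (by linarith)
      fun x hx => by
        rw [abs_of_nonpos hx.2, abs_of_nonpos (by linarith [hx.2])]; ring,
    intervalIntegral_eq_of_eqOn_quadratic (-4) (4 * r) (1 - 2 * r) hr₀
      fun x hx => by
        rw [abs_of_nonneg hx.1, abs_of_nonpos (by linarith [hx.2])]; ring,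
    intervalIntegral_eq_of_eqOn_quadratic 4 (-4 * r - 4) (1 + 2 * r) hr₁
      fun x hx => by
        rw [abs_of_nonneg (by linarith [hx.1]), abs_of_nonneg (by linarith [hx.1])]; ring]
  ring

theorem intervalIntegral_kernel_product_of_one_le {r : ℝ} (hr₁ : 1 ≤ r) (hr₂ : r ≤ 2) :
    ∫ x in r - 1..1, (2 * |x| - 1) * (2 * |x - r| - 1) =
      2 / 3 * (-r ^ 3 + 3 * r ^ 2 - (3 / 2) * r - 1) := by
  rw [intervalIntegral_eq_of_eqOn_quadratic (-4) (4 * r) (1 - 2 * r) (by linarith)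
      fun x hx => by
        rw [abs_of_nonneg (by linarith [hx.1]), abs_of_nonpos (by linarith [hx.2])]; ring]
  ring

theorem integral_g_one_mul_g_one {r : ℝ} (hr : 0 ≤ r) :
    ∫ x, g 1 0 x * g 1 r x = 2 / 3 * kappa r := by
  rw [integral_g_one_mul_g_one_eq_setIntegral hr, kappa]
  split_ifs with hr₁ hr₂
  · rw [integral_Icc_eq_integral_Ioc, ← integral_of_le (by linarith),
      intervalIntegral_kernel_product_of_le_one hr hr₁]
  · rw [integral_Icc_eq_integral_Ioc, ← integral_of_le (by linarith),
      intervalIntegral_kernel_product_of_one_le (by linarith) hr₂]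
  · rw [Icc_eq_empty (by linarith), setIntegral_empty, mul_zero]

theorem integral_g_mul_g (η s t : ℝ) (hη : 0 < η) :
    ∫ x, g η s x * g η t x = 2 * η ^ 3 / 3 * kappa (|s - t| / η) := by
  wlog hst : s ≤ t generalizing s t
  · simp_rw [mul_comm (g η s _), this t s (by linarith), abs_sub_comm]
  rw [integral_g_mul_g_eq_mul_integral_g_one η s t hη, abs_sub_comm, abs_of_nonneg (by linarith),
    integral_g_one_mul_g_one (div_nonneg (by linarith) hη.le)]
  ring

theorem kernel_integral_eq_kappa (η : ℝ) (hη : 0 < η) (s t : ℝ) :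
    (3 / (2 * η ^ 3)) * ∫ x : ℝ, g η s x * g η t x = kappa (|s - t| / η) ∧
    (3 / (2 * η ^ 3)) * ∫ x : ℝ, (g η t x) ^ 2 = 1 := by
  have hnorm (κ : ℝ) : 3 / (2 * η ^ 3) * (2 * η ^ 3 / 3 * κ) = κ := by field_simp
  refine ⟨by rw [integral_g_mul_g η s t hη, hnorm], ?_⟩
  simp_rw [sq, integral_g_mul_g η t t hη, hnorm, sub_self, abs_zero, zero_div, kappa]
  norm_num
end

section
/- Fix η > 0, t > 0. Let Z_j, j ≥ 1, be independent standard normal random variables, μ, b ∈ ℝ, σ > 0, and X_j := b + jμ + σZ_j. Define μ̂_n := (6/((nη)³ - nη)) ∑_{j=1}^{nη} (2j - nη - 1) X_{⌊nt⌋ + j} (for n such that nη is a positive integer ≥ 2). Then μ̂_n → μ almost surely as n → ∞. -/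
/-!
Write `X_j = b + jμ + σZ_j`. The weights `2j - N - 1` sum to `0` and satisfy
`∑ j (2j - N - 1) = (N³ - N)/6`, so the estimator equals `μ + σ T_n`, where `T_n` is the same
weighted sum of the noise `Z`. By independence `Var T_n = 12/(N³ - N) = O(n⁻³)`, which is
summable; hence `∑ T_n²` has finite expectation, is finite almost surely, and `T_n → 0` a.s.
-/

open Finset Filter MeasureTheory ProbabilityTheory
open scoped ENNReal Topology

lemma sum_Icc_cast (N : ℕ) : ∑ j ∈ Icc 1 N, (j : ℝ) = N * (N + 1) / 2 := by
  induction N with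
  | zero => simp
  | succ n ih => rw [sum_Icc_succ_top (by omega), ih]; push_cast; ring

lemma sum_Icc_cast_sq (N : ℕ) : ∑ j ∈ Icc 1 N, (j : ℝ) ^ 2 = N * (N + 1) * (2 * N + 1) / 6 := by
  induction N with
  | zero => simp
  | succ n ih => rw [sum_Icc_succ_top (by omega), ih]; push_cast; ring

lemma sum_Icc_centered (N : ℕ) : ∑ j ∈ Icc 1 N, (2 * (j : ℝ) - N - 1) = 0 := by
  simp only [sum_sub_distrib, ← mul_sum, sum_const, Nat.card_Icc, nsmul_eq_mul, sum_Icc_cast]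
  push_cast; ring

lemma sum_Icc_mul_centered (N : ℕ) :
    ∑ j ∈ Icc 1 N, (j : ℝ) * (2 * j - N - 1) = ((N : ℝ) ^ 3 - N) / 6 := by
  simp only [mul_sub, sum_sub_distrib, ← sum_mul, mul_left_comm _ (2 : ℝ), ← mul_sum, ← sq,
    sum_Icc_cast, sum_Icc_cast_sq, mul_one]
  ring

lemma sum_Icc_centered_sq (N : ℕ) :
    ∑ j ∈ Icc 1 N, (2 * (j : ℝ) - N - 1) ^ 2 = ((N : ℝ) ^ 3 - N) / 3 := by
  have hexpand (j : ℕ) :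
      (2 * (j : ℝ) - N - 1) ^ 2 = 4 * (j : ℝ) ^ 2 - 4 * (N + 1) * j + (N + 1) ^ 2 := by ring
  simp only [hexpand, sum_add_distrib, sum_sub_distrib, ← mul_sum, sum_const, Nat.card_Icc,
    nsmul_eq_mul, sum_Icc_cast, sum_Icc_cast_sq]
  push_cast; ring

lemma cube_sub_self_ge {x : ℝ} (hx : 2 ≤ x) : 3 / 4 * x ^ 3 ≤ x ^ 3 - x := by
  nlinarith [mul_nonneg (mul_nonneg (zero_le_two.trans hx) (sub_nonneg.2 hx))
    (by linarith : 0 ≤ x + 2)]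

lemma summable_inv_cube_sub_self {N : ℕ → ℕ} (hN : ∀ n, n ≤ N n) :
    Summable fun n => ((N n : ℝ) ^ 3 - N n)⁻¹ := by
  refine Summable.of_norm_bounded_eventually_nat
    ((Real.summable_nat_pow_inv.mpr (by norm_num : 1 < 3)).mul_left 2) ?_
  filter_upwards [eventually_ge_atTop 2] with n hn
  have hn' : (2 : ℝ) ≤ n := by exact_mod_cast hn
  have hnN : (n : ℝ) ≤ N n := by exact_mod_cast hN n
  have hcube : (n : ℝ) ^ 3 ≤ (N n : ℝ) ^ 3 := by gcongr
  have hD : (n : ℝ) ^ 3 / 2 ≤ (N n : ℝ) ^ 3 - N n := by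
    linarith [cube_sub_self_ge (hn'.trans hnN), pow_pos (zero_lt_two.trans_le hn') 3]
  have hn3 : 0 < (n : ℝ) ^ 3 / 2 := by positivity
  rw [Real.norm_of_nonneg (inv_nonneg.mpr (hn3.trans_le hD).le), ← div_eq_mul_inv]
  rw [le_div_iff₀ (by positivity)]
  calc ((N n : ℝ) ^ 3 - N n)⁻¹ * (n : ℝ) ^ 3 ≤ ((n : ℝ) ^ 3 / 2)⁻¹ * (n : ℝ) ^ 3 := by gcongr
    _ = 2 := by field_simp

/-- The least-squares slope of `x (m + 1), …, x (m + N)` against `1, …, N`. -/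
noncomputable def driftEstimator (N m : ℕ) (x : ℕ → ℝ) : ℝ :=
  6 / ((N : ℝ) ^ 3 - N) * ∑ j ∈ Icc 1 N, (2 * (j : ℝ) - N - 1) * x (m + j)

lemma driftEstimator_affine {N : ℕ} (hN : 2 ≤ N) (m : ℕ) (b μ σ : ℝ) (z : ℕ → ℝ) :
    driftEstimator N m (fun j => b + j * μ + σ * z j) = μ + σ * driftEstimator N m z := by
  have hD : (N : ℝ) ^ 3 - N ≠ 0 := by
    have hN' : (2 : ℝ) ≤ N := by exact_mod_cast hN
    linarith [cube_sub_self_ge hN', pow_pos (zero_lt_two.trans_le hN') 3]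
  have hterm : ∀ j : ℕ, (2 * (j : ℝ) - N - 1) * (b + ((m + j : ℕ) : ℝ) * μ + σ * z (m + j)) =
      (b + m * μ) * (2 * (j : ℝ) - N - 1) + μ * ((j : ℝ) * (2 * j - N - 1)) +
        σ * ((2 * (j : ℝ) - N - 1) * z (m + j)) := fun j => by push_cast; ring
  simp only [driftEstimator, hterm, sum_add_distrib, ← mul_sum, sum_Icc_centered,
    sum_Icc_mul_centered, mul_zero, zero_add]
  generalize (N : ℝ) ^ 3 - N = D at hD ⊢
  field_simp

section
variable {Ω : Type*} [MeasurableSpace Ω] {P : Measure Ω}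

lemma ae_tendsto_zero_of_summable_variance [IsFiniteMeasure P] {T : ℕ → Ω → ℝ}
    (hT : ∀ n, MemLp (T n) 2 P) (hmean : ∀ n, P[T n] = 0) (hvar : Summable fun n => Var[T n; P]) :
    ∀ᵐ ω ∂P, Tendsto (fun n => T n ω) atTop (𝓝 0) := by
  have hmeas n : AEMeasurable (fun ω => ‖T n ω‖ₑ ^ 2) P := (hT n).aemeasurable.enorm.pow_const 2
  have hsq : ∫⁻ ω, ∑' n, ‖T n ω‖ₑ ^ 2 ∂P ≠ ∞ := by
    have hevar n : ∫⁻ ω, ‖T n ω‖ₑ ^ 2 ∂P = .ofReal Var[T n; P] := by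
      simp [ofReal_variance (hT n), evariance, hmean n]
    simpa only [lintegral_tsum hmeas, hevar,
      ← ENNReal.ofReal_tsum_of_nonneg (fun n => variance_nonneg _ _) hvar]
      using ENNReal.ofReal_ne_top
  filter_upwards [ae_lt_top' (AEMeasurable.tsum hmeas) hsq] with ω hω
  -- `‖T n ω‖ₑ ^ 2 → 0` as the terms of a convergent series; take square roots.
  have hroot := ((ENNReal.continuous_rpow_const (y := ((2 : ℕ) : ℝ)⁻¹)).tendsto 0).comp
    (ENNReal.tendsto_atTop_zero_of_tsum_ne_top hω.ne)
  simp only [Function.comp_def, ENNReal.pow_rpow_inv_natCast two_ne_zero] at hroot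
  rw [ENNReal.zero_rpow_of_pos (by norm_num)] at hroot
  exact tendsto_zero_iff_enorm_tendsto_zero.2 hroot

lemma variance_sum_const_mul {ι : Type*} {Z : ι → Ω → ℝ} (hZ : ∀ i, MemLp (Z i) 2 P)
    (hind : iIndepFun Z P) (s : Finset ι) (a : ι → ℝ) :
    Var[fun ω => ∑ i ∈ s, a i * Z i ω; P] = ∑ i ∈ s, a i ^ 2 * Var[Z i; P] := by
  have hsum : (fun ω => ∑ i ∈ s, a i * Z i ω) = ∑ i ∈ s, fun ω => a i * Z i ω := by
    ext ω; simp
  rw [hsum, IndepFun.variance_sum (fun i _ => (hZ i).const_mul _)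
    fun i _ j _ hij => (hind.indepFun hij).comp (measurable_const_mul _) (measurable_const_mul _)]
  simp only [variance_const_mul]

lemma ProbabilityTheory.HasLaw.of_map_eq {𝓧 : Type*} [MeasurableSpace 𝓧] {X : Ω → 𝓧}
    {μ : Measure 𝓧} [NeZero μ] (h : P.map X = μ) : HasLaw X μ P :=
  ⟨.of_map_ne_zero (h ▸ NeZero.ne μ), h⟩

lemma ae_tendsto_driftEstimator_zero [IsFiniteMeasure P] {Z : ℕ → Ω → ℝ}
    (hZ : ∀ j, MemLp (Z j) 2 P) (hind : iIndepFun Z P)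
    (hmean : ∀ j, P[Z j] = 0) {v : ℝ} (hvar : ∀ j, Var[Z j; P] = v) {N m : ℕ → ℕ}
    (hN : ∀ n, n ≤ N n) :
    ∀ᵐ ω ∂P, Tendsto (fun n => driftEstimator (N n) (m n) (Z · ω)) atTop (𝓝 0) := by
  refine ae_tendsto_zero_of_summable_variance (T := fun n ω => driftEstimator (N n) (m n) (Z · ω))
    (fun n => (memLp_finsetSum _ fun j _ => (hZ _).const_mul _).const_mul _)
    (fun n => by
      simp only [driftEstimator]
      rw [integral_const_mul,
        integral_finsetSum _ fun j _ => ((hZ _).integrable one_le_two).const_mul _]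
      simp [integral_const_mul, hmean]) ?_
  have hshift n : iIndepFun (fun j => Z (m n + j)) P := hind.precomp (add_right_injective _)
  have hvar' n : Var[fun ω => driftEstimator (N n) (m n) (Z · ω); P] =
      12 * v * ((N n : ℝ) ^ 3 - N n)⁻¹ := by
    simp only [driftEstimator]
    rw [variance_const_mul, variance_sum_const_mul (fun j => hZ _) (hshift n)]
    simp only [hvar, ← sum_mul, sum_Icc_centered_sq]
    rcases eq_or_ne ((N n : ℝ) ^ 3 - N n) 0 with hD | hD
    · simp [hD]
    · field_simp
      ring
  simpa only [hvar'] using (summable_inv_cube_sub_self hN).mul_left (12 * v)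

end

theorem drift_mle_strongly_consistent_general
    {Ω : Type*} [MeasurableSpace Ω] (P : Measure Ω) [IsProbabilityMeasure P]
    (Z : ℕ → Ω → ℝ)
    (hind : iIndepFun Z P)
    (hlaw : ∀ j, Measure.map (Z j) P = gaussianReal 0 1)
    (η : ℕ) (hη : 1 ≤ η) (t : ℝ) (μ b σ : ℝ)
    (X : ℕ → Ω → ℝ) (hX : ∀ j ω, X j ω = b + j * μ + σ * Z j ω) :
    ∀ᵐ ω ∂P, Tendsto (fun n : ℕ =>
        (6 / (((n * η : ℕ) : ℝ) ^ 3 - (n * η : ℕ))) *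
          ∑ j ∈ Finset.Icc 1 (n * η),
            (2 * (j : ℝ) - (n * η : ℕ) - 1) * X (⌊(n : ℝ) * t⌋.toNat + j) ω)
      atTop (nhds μ) := by
  have hZ j : HasLaw (Z j) (gaussianReal 0 1) P := .of_map_eq (hlaw j)
  have hnoise := ae_tendsto_driftEstimator_zero (m := fun n => ⌊(n : ℝ) * t⌋.toNat)
    (fun j => (hlaw j ▸ memLp_id_gaussianReal 2).comp_of_map (hZ j).aemeasurable) hind
    (fun j => by simp [(hZ j).integral_eq])
    (fun j => (hZ j).variance_eq.trans variance_id_gaussianReal)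
    (fun n => Nat.le_mul_of_pos_right n hη)
  filter_upwards [hnoise] with ω hω
  have hlim := (hω.const_mul σ).const_add μ
  rw [mul_zero, add_zero] at hlim
  refine hlim.congr' ?_
  filter_upwards [eventually_ge_atTop 2] with n hn
  have hXω : (X · ω) = fun j => b + j * μ + σ * Z j ω := funext fun j => hX j ω
  rw [← driftEstimator_affine (le_trans hn (Nat.le_mul_of_pos_right n hη)), ← hXω]
  rfl

theorem drift_mle_strongly_consistent
    {Ω : Type*} [MeasurableSpace Ω] (P : Measure Ω) [IsProbabilityMeasure P]
    (Z : ℕ → Ω → ℝ) (hmeas : ∀ j, Measurable (Z j))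
    (hind : iIndepFun Z P)
    (hlaw : ∀ j, Measure.map (Z j) P = gaussianReal 0 1)
    (η : ℕ) (hη : 1 ≤ η) (t : ℝ) (ht : 0 < t) (μ b σ : ℝ) (hσ : 0 < σ)
    (X : ℕ → Ω → ℝ) (hX : ∀ j ω, X j ω = b + j * μ + σ * Z j ω) :
    ∀ᵐ ω ∂P, Tendsto (fun n : ℕ =>
        (6 / (((n * η : ℕ) : ℝ) ^ 3 - (n * η : ℕ))) *
          ∑ j ∈ Finset.Icc 1 (n * η),
            (2 * (j : ℝ) - (n * η : ℕ) - 1) * X (⌊(n : ℝ) * t⌋.toNat + j) ω)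
      atTop (nhds μ) :=
  drift_mle_strongly_consistent_general P Z hind hlaw η hη t μ b σ X hX
end
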